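/- Fix n : ℕ with n ≥ 1. With B', R, u as in the ramp setup, let ψ_f = (Matrix.exp (I·(π/4)·B') * Matrix.exp (-I·(π/2)·R)).mulVec u. Then ‖ψ_f 0‖² = 1, where 0 denotes the all-false bitstring; i.e., QAOA1 with angles (β, γ) = (π/4, π/2) finds the global minimum of the Hamming ramp with probability 1. -/

import Mathlib

/-!
The cost layer `exp (-i π/2 R)` multiplies `|z⟩` by `(-i)^|z|`, so it turns the uniform state
into the product state `⊗ (|0⟩ - i|1⟩)/√2`. The mixer factors into the commuting one-qubit
rotations `exp (i π/4 X_j) = (1 + i X_j)/√2`, and each of them maps `(|0⟩ - i|1⟩)/√2` exactly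
to `|0⟩`. Hence the final state is the all-false string, with amplitude `√2^n · 2^(-n/2) = 1`.
-/

open Matrix Complex

noncomputable def pauliX (n : ℕ) (i : Fin n) :
    Matrix (Fin n → Bool) (Fin n → Bool) ℂ :=
  Matrix.of fun z z' => if z' = Function.update z i (!(z i)) then 1 else 0

def hammingWeight {n : ℕ} (z : Fin n → Bool) : ℕ :=
  (Finset.univ.filter fun i => z i = true).card

theorem NormedSpace.exp_I_mul_smul_of_mul_self_eq_one {𝔸 : Type*} [Ring 𝔸] [Algebra ℂ 𝔸]
    [TopologicalSpace 𝔸] [IsTopologicalRing 𝔸] [ContinuousSMul ℂ 𝔸] [T2Space 𝔸] {A : 𝔸}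
    (hA : A * A = 1) (t : ℂ) :
    NormedSpace.exp ((I * t) • A) = cos t • 1 + (sin t * I) • A := by
  have hpow : ∀ k, A ^ (2 * k) = 1 := fun k => by rw [pow_mul, sq, hA, one_pow]
  have heven : HasSum (fun k => ((2 * k).factorial : ℂ)⁻¹ • ((I * t) • A) ^ (2 * k))
      (cos t • 1) := by
    refine ((hasSum_cos' t).smul_const (1 : 𝔸)).congr_fun fun k => ?_
    rw [smul_pow, hpow, smul_smul]
    congr 1
    ring
  have hodd : HasSum (fun k => ((2 * k + 1).factorial : ℂ)⁻¹ • ((I * t) • A) ^ (2 * k + 1))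
      ((sin t * I) • A) := by
    refine (((hasSum_sin' t).mul_right I).smul_const A).congr_fun fun k => ?_
    rw [smul_pow, pow_succ A, hpow, one_mul, smul_smul, div_mul_cancel₀ _ I_ne_zero]
    congr 1
    ring
  rw [NormedSpace.exp_eq_tsum ℂ]
  exact (HasSum.even_add_odd (f := fun m => (m.factorial : ℂ)⁻¹ • ((I * t) • A) ^ m)
    heven hodd).tsum_eq

theorem Complex.cos_pi_div_four : cos ((Real.pi : ℂ) / 4) = √2 / 2 := by
  rw [← ofReal_ofNat, ← ofReal_div, ← ofReal_cos, Real.cos_pi_div_four]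
  norm_cast

theorem Complex.sin_pi_div_four : sin ((Real.pi : ℂ) / 4) = √2 / 2 := by
  rw [← ofReal_ofNat, ← ofReal_div, ← ofReal_sin, Real.sin_pi_div_four]
  norm_cast

theorem Matrix.exp_smul_diagonal_natCast {ι : Type*} [Fintype ι] [DecidableEq ι] (t : ℂ)
    (k : ι → ℕ) :
    NormedSpace.exp (t • diagonal fun i => (k i : ℂ)) = diagonal fun i => exp t ^ k i := by
  rw [← diagonal_smul, exp_diagonal, Pi.exp_def]
  congr 1
  funext i
  rw [Pi.smul_apply, smul_eq_mul, ← exp_eq_exp_ℂ, mul_comm, exp_nat_mul]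

section Qubits

variable {n : ℕ}

def flipBit (z : Fin n → Bool) (i : Fin n) : Fin n → Bool :=
  Function.update z i (!z i)

theorem flipBit_apply_of_ne {z : Fin n → Bool} {i j : Fin n} (h : j ≠ i) :
    flipBit z i j = z j :=
  Function.update_of_ne h _ _

theorem flipBit_flipBit_self (z : Fin n → Bool) (i : Fin n) : flipBit (flipBit z i) i = z := by
  simp [flipBit]

theorem flipBit_comm (z : Fin n → Bool) (i j : Fin n) :
    flipBit (flipBit z i) j = flipBit (flipBit z j) i := by
  rcases eq_or_ne i j with rfl | h
  · rfl
  · change Function.update (flipBit z i) j (!flipBit z i j)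
      = Function.update (flipBit z j) i (!flipBit z j i)
    rw [flipBit_apply_of_ne h.symm, flipBit_apply_of_ne h, flipBit, flipBit,
      Function.update_comm h]

theorem hammingWeight_update_true (z : Fin n → Bool) (i : Fin n) :
    hammingWeight (Function.update z i true) = hammingWeight (Function.update z i false) + 1 := by
  have hsupp : (Finset.univ.filter fun j => Function.update z i true j = true)
      = insert i (Finset.univ.filter fun j => Function.update z i false j = true) := by
    ext j
    by_cases h : j = i <;> simp [h]
  rw [hammingWeight, hammingWeight, hsupp, Finset.card_insert_of_notMem (by simp)]

@[simp]
theorem hammingWeight_const_false : hammingWeight (fun _ : Fin n => false) = 0 := by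
  simp [hammingWeight]

theorem pauliX_mulVec_apply (i : Fin n) (v : (Fin n → Bool) → ℂ) (z : Fin n → Bool) :
    (pauliX n i *ᵥ v) z = v (flipBit z i) := by
  simp [mulVec, dotProduct, pauliX, flipBit, ite_mul, Finset.sum_ite_eq']

theorem pauliX_mul_self (i : Fin n) : pauliX n i * pauliX n i = 1 := by
  refine ext_iff_mulVec.mpr fun v => funext fun z => ?_
  rw [← mulVec_mulVec, pauliX_mulVec_apply, pauliX_mulVec_apply, flipBit_flipBit_self,
    one_mulVec]

theorem pauliX_commute (i j : Fin n) : Commute (pauliX n i) (pauliX n j) := by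
  refine ext_iff_mulVec.mpr fun v => funext fun z => ?_
  simp only [← mulVec_mulVec, pauliX_mulVec_apply, flipBit_comm]

theorem exp_pi_div_four_pauliX_mulVec (a : Fin n) (f : (Fin n → Bool) → ℂ)
    (hf : ∀ z, f (flipBit z a) = f z) :
    NormedSpace.exp ((I * ((Real.pi : ℂ) / 4)) • pauliX n a) *ᵥ
        (fun z => (-I) ^ hammingWeight z * f z)
      = fun z => (-I) ^ hammingWeight z * (if z a then 0 else √2 * f z) := by
  rw [NormedSpace.exp_I_mul_smul_of_mul_self_eq_one (pauliX_mul_self a), cos_pi_div_four,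
    sin_pi_div_four]
  funext z
  simp only [add_mulVec, smul_mulVec, one_mulVec, Pi.add_apply, Pi.smul_apply, smul_eq_mul,
    pauliX_mulVec_apply, hf]
  have hphase : (-I) ^ hammingWeight (Function.update z a true)
      = -I * (-I) ^ hammingWeight (Function.update z a false) := by
    rw [hammingWeight_update_true, pow_succ']
  cases hza : z a
  · have hz : z = Function.update z a false := by rw [← hza, Function.update_eq_self]
    have hflip : flipBit z a = Function.update z a true := by rw [flipBit, hza]; rfl
    rw [if_neg Bool.false_ne_true, hflip, hphase, ← hz]
    linear_combination (-(√2 / 2 : ℂ) * (-I) ^ hammingWeight z * f z) * I_sq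
  · have hz : (-I) ^ hammingWeight z = -I * (-I) ^ hammingWeight (Function.update z a false) := by
      rw [← hphase, ← hza, Function.update_eq_self]
    have hflip : flipBit z a = Function.update z a false := by rw [flipBit, hza]; rfl
    rw [if_pos rfl, hflip, hz]
    ring

theorem exp_sum_pauliX_mulVec (s : Finset (Fin n)) (c : ℂ) :
    NormedSpace.exp (∑ i ∈ s, (I * ((Real.pi : ℂ) / 4)) • pauliX n i) *ᵥ
        (fun z => (-I) ^ hammingWeight z * c)
      = fun z =>
        (-I) ^ hammingWeight z * (if ∀ i ∈ s, z i = false then √2 ^ s.card * c else 0) := by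
  induction s using Finset.induction_on with
  | empty => simp
  | insert a s ha ih =>
    have hcomm : Commute ((I * ((Real.pi : ℂ) / 4)) • pauliX n a)
        (∑ i ∈ s, (I * ((Real.pi : ℂ) / 4)) • pauliX n i) :=
      Commute.sum_right _ _ _ fun i _ => ((pauliX_commute a i).smul_left _).smul_right _
    have hinv : ∀ z, (if ∀ i ∈ s, flipBit z a i = false then √2 ^ s.card * c else 0)
        = if ∀ i ∈ s, z i = false then √2 ^ s.card * c else 0 := fun z =>
      if_congr (forall₂_congr fun i hi => by rw [flipBit_apply_of_ne (ne_of_mem_of_not_mem hi ha)])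
        rfl rfl
    rw [Finset.sum_insert ha, Matrix.exp_add_of_commute _ _ hcomm, ← mulVec_mulVec, ih,
      exp_pi_div_four_pauliX_mulVec a _ hinv]
    funext z
    congr 1
    by_cases hza : z a = true
    · simp [hza]
    by_cases hs : ∀ i ∈ s, z i = false
    · have hs' : ∀ i ∈ insert a s, z i = false :=
        (Finset.forall_mem_insert _ _ _).mpr ⟨Bool.eq_false_iff.mpr hza, hs⟩
      rw [if_neg hza, if_pos hs, if_pos hs', Finset.card_insert_of_notMem ha, pow_succ]
      ring
    · have hs' : ¬∀ i ∈ insert a s, z i = false := fun h =>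
        hs fun i hi => h i (Finset.mem_insert_of_mem hi)
      rw [if_neg hza, if_neg hs, if_neg hs', mul_zero]

end Qubits

theorem sqrt_two_pow_mul_two_rpow_neg_half (n : ℕ) : √2 ^ n * (2 : ℝ) ^ (-(n : ℝ) / 2) = 1 := by
  rw [Real.sqrt_eq_rpow, ← Real.rpow_natCast, ← Real.rpow_mul zero_le_two,
    ← Real.rpow_add zero_lt_two, show (1 / 2 : ℝ) * n + -n / 2 = 0 by ring, Real.rpow_zero]

theorem qaoa1_ramp_success_general (n : ℕ)
    (B' R : Matrix (Fin n → Bool) (Fin n → Bool) ℂ)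
    (hB' : B' = ∑ i, pauliX n i)
    (hR : R = Matrix.diagonal fun z => (hammingWeight z : ℂ))
    (u : (Fin n → Bool) → ℂ)
    (hu : u = fun _ => (((2 : ℝ) ^ (-(n : ℝ) / 2) : ℝ) : ℂ))
    (ψf : (Fin n → Bool) → ℂ)
    (hψf : ψf = (NormedSpace.exp ((Complex.I * ((Real.pi : ℂ) / 4)) • B') *
        NormedSpace.exp ((-Complex.I * ((Real.pi : ℂ) / 2)) • R)).mulVec u) :
    ‖ψf (fun _ => false)‖ ^ 2 = 1 := by
  subst hB' hR hu hψf
  set c : ℂ := (((2 : ℝ) ^ (-(n : ℝ) / 2) : ℝ) : ℂ)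
  have hcost : NormedSpace.exp ((-I * ((Real.pi : ℂ) / 2)) •
        diagonal fun z : Fin n → Bool => (hammingWeight z : ℂ)) *ᵥ (fun _ => c)
      = fun z => (-I) ^ hammingWeight z * c := by
    rw [exp_smul_diagonal_natCast, show -I * ((Real.pi : ℂ) / 2) = -Real.pi / 2 * I by ring,
      exp_neg_pi_div_two_mul_I]
    exact funext fun z => mulVec_diagonal _ _ z
  rw [← mulVec_mulVec, hcost, Finset.smul_sum, exp_sum_pauliX_mulVec]
  simp [c, ← ofReal_pow, ← ofReal_mul, sqrt_two_pow_mul_two_rpow_neg_half]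

/-- QAOA1 with angles `(β, γ) = (π/4, π/2)` finds the global minimum
(the all-false string) of the Hamming ramp with probability 1. -/
theorem qaoa1_ramp_success (n : ℕ) (hn : 1 ≤ n)
    (B' R : Matrix (Fin n → Bool) (Fin n → Bool) ℂ)
    (hB' : B' = ∑ i, pauliX n i)
    (hR : R = Matrix.diagonal fun z => (hammingWeight z : ℂ))
    (u : (Fin n → Bool) → ℂ)
    (hu : u = fun _ => (((2 : ℝ) ^ (-(n : ℝ) / 2) : ℝ) : ℂ))
    (ψf : (Fin n → Bool) → ℂ)
    (hψf : ψf = (NormedSpace.exp ((Complex.I * ((Real.pi : ℂ) / 4)) • B') *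
        NormedSpace.exp ((-Complex.I * ((Real.pi : ℂ) / 2)) • R)).mulVec u) :
    ‖ψf (fun _ => false)‖ ^ 2 = 1 :=
  qaoa1_ramp_success_general n B' R hB' hR u hu ψf hψf
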